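/- Let S be a Suslin line and let X be the one-point compactification of S. Then X is a compact Hausdorff space with the countable chain condition, while X × X does not have the countable chain condition; consequently, C(X) is a unital commutative C*-algebra with the countable chain condition such that C(X × X) does not have the countable chain condition. -/

import Mathlib

/-- A topological space has the countable chain condition (CCC) if every family of
pairwise disjoint nonempty open subsets is countable. -/
def TopCCC (X : Type*) [TopologicalSpace X] : Prop :=
  ∀ 𝒰 : Set (Set X), (∀ U ∈ 𝒰, IsOpen U) → (∀ U ∈ 𝒰, U.Nonempty) →
    𝒰.Pairwise Disjoint → 𝒰.Countable

/-- A C*-algebra has the countable chain condition (CCC) if every family of pairwise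
orthogonal nonzero closed two-sided ideals is countable; two closed two-sided ideals are
orthogonal if their intersection is the zero ideal.  (Only the ring and topological
structure of the algebra are needed to state this.) -/
def CStarCCC (A : Type*) [NonUnitalNonAssocRing A] [TopologicalSpace A] : Prop :=
  ∀ 𝒮 : Set (TwoSidedIdeal A), (∀ I ∈ 𝒮, IsClosed (I : Set A)) →
    (∀ I ∈ 𝒮, I ≠ ⊥) → (𝒮.Pairwise fun I J => I ⊓ J = ⊥) → 𝒮.Countable

/-- A Suslin line is a linearly ordered set, equipped with the order topology, which is
unbounded (no minimum and no maximum), densely ordered, complete (every nonempty set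
bounded above has a least upper bound and every nonempty set bounded below has a greatest
lower bound), has the countable chain condition but is not separable. -/
def IsSuslinLine (S : Type*) [LinearOrder S] [TopologicalSpace S] [OrderTopology S] :
    Prop :=
  NoMinOrder S ∧ NoMaxOrder S ∧ DenselyOrdered S ∧
    (∀ s : Set S, s.Nonempty → BddAbove s → ∃ a, IsLUB s a) ∧
    (∀ s : Set S, s.Nonempty → BddBelow s → ∃ a, IsGLB s a) ∧
    TopCCC S ∧ ¬TopologicalSpace.SeparableSpace S

/-!
The one-point compactification `X` of a Suslin line `S` is compact Hausdorff because a complete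
dense line without endpoints is locally compact. It inherits the chain condition from its dense
subspace `S`. On the other hand `S × S` carries uncountably many disjoint boxes
`(a, b) × (b, c)`: for a maximal disjoint family of such boxes, countable if `S × S` were CCC,
the countably many middle points `b` are not dense, so some interval `(a, c)` avoids them all
and the box `(a, b) × (b, c)` for any `b ∈ (a, c)` could be added to the family. Since `S × S`
is open in `X × X`, the square `X × X` is not CCC either.

For a compact Hausdorff space `Y`, closed ideals of `C(Y, ℂ)` correspond to open subsets of `Y`
(`ContinuousMap.idealOpensGI`), with orthogonal ideals corresponding to disjoint open sets, so
`C(Y, ℂ)` is CCC exactly when `Y` is.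
-/

open Set Topology TopologicalSpace ContinuousMap

theorem Set.PairwiseDisjoint.injOn_of_ne_bot {ι α : Type*} [PartialOrder α] [OrderBot α]
    {s : Set ι} {f : ι → α} (hs : s.PairwiseDisjoint f) (hf : ∀ i ∈ s, f i ≠ ⊥) : s.InjOn f :=
  fun i hi _ hj hij => hs.elim hi hj fun hd => hf i hi (disjoint_self.1 (hij ▸ hd))

theorem Set.exists_maximal_pairwiseDisjoint {ι α : Type*} [PartialOrder α] [OrderBot α]
    (t : Set ι) (f : ι → α) : ∃ u, Maximal (fun u => u ⊆ t ∧ u.PairwiseDisjoint f) u :=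
  zorn_subset _ fun c hct hc =>
    ⟨⋃₀ c, ⟨sUnion_subset fun _ hs => (hct hs).1, (hc.pairwiseDisjoint_sUnion f).2 fun _ hs =>
      (hct hs).2⟩, fun _ => subset_sUnion_of_mem⟩

section ChainCondition

variable {X Y ι : Type*} [TopologicalSpace X] [TopologicalSpace Y]

theorem TopCCC.countable_of_pairwiseDisjoint (h : TopCCC X) {s : Set ι} {U : ι → Set X}
    (hs : s.PairwiseDisjoint U) (ho : ∀ i ∈ s, IsOpen (U i)) (hne : ∀ i ∈ s, (U i).Nonempty) :
    s.Countable := by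
  have hinj : s.InjOn U := hs.injOn_of_ne_bot fun i hi => (hne i hi).ne_empty
  exact countable_of_injective_of_countable_image hinj <|
    h _ (forall_mem_image.2 ho) (forall_mem_image.2 hne) (hinj.pairwise_image.2 hs)

theorem CStarCCC.countable_of_pairwiseDisjoint {A : Type*} [NonUnitalNonAssocRing A]
    [TopologicalSpace A] (h : CStarCCC A) {s : Set ι} {I : ι → TwoSidedIdeal A}
    (hs : s.PairwiseDisjoint I) (hc : ∀ i ∈ s, IsClosed (I i : Set A)) (hne : ∀ i ∈ s, I i ≠ ⊥) :
    s.Countable := by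
  have hinj : s.InjOn I := hs.injOn_of_ne_bot hne
  exact countable_of_injective_of_countable_image hinj <|
    h _ (forall_mem_image.2 hc) (forall_mem_image.2 hne)
      (hinj.pairwise_image.2 (hs.mono' fun _ _ => Disjoint.eq_bot))

theorem TopCCC.of_denseRange {f : X → Y} (hf : Continuous f) (hd : DenseRange f)
    (h : TopCCC X) : TopCCC Y := fun _ ho hne hdisj =>
  h.countable_of_pairwiseDisjoint (U := (f ⁻¹' ·)) (hdisj.mono' fun _ _ hUV => hUV.preimage f)
    (fun U hU => (ho U hU).preimage hf) fun U hU => hd.exists_mem_open (ho U hU) (hne U hU)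

theorem TopCCC.of_isOpenEmbedding {f : X → Y} (hf : IsOpenEmbedding f) (h : TopCCC Y) :
    TopCCC X := fun _ ho hne hdisj =>
  h.countable_of_pairwiseDisjoint (U := (f '' ·))
    (hdisj.mono' fun _ _ hUV => (disjoint_image_iff hf.injective).2 hUV)
    (fun U hU => hf.isOpenMap U (ho U hU)) fun U hU => (hne U hU).image f

end ChainCondition

section IdealsOfContinuousFunctions

variable {X R : Type*} [TopologicalSpace X] [Ring R] [TopologicalSpace R] [IsTopologicalRing R]

theorem setOfIdeal_asIdeal_nonempty {I : TwoSidedIdeal C(X, R)} (hI : I ≠ ⊥) :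
    (setOfIdeal I.asIdeal).Nonempty := by
  rw [nonempty_iff_ne_empty]
  intro h
  have hle : I.asIdeal ≤ idealOfSet R ∅ := (ideal_gc X R _ _).1 h.le
  rw [idealOfEmpty_eq_bot] at hle
  exact hI (le_bot_iff.1 fun f hf => by simpa using hle (TwoSidedIdeal.mem_asIdeal.2 hf))

theorem disjoint_setOfIdeal_asIdeal [NoZeroDivisors R] {I J : TwoSidedIdeal C(X, R)}
    (h : Disjoint I J) : Disjoint (setOfIdeal I.asIdeal) (setOfIdeal J.asIdeal) := by
  rw [Set.disjoint_left]
  rintro x hxI hxJ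
  obtain ⟨f, hfI, hfx⟩ := mem_setOfIdeal.1 hxI
  obtain ⟨g, hgJ, hgx⟩ := mem_setOfIdeal.1 hxJ
  have hfg : f * g ∈ I ⊓ J := (TwoSidedIdeal.mem_inf _).2
    ⟨I.mul_mem_right _ _ (TwoSidedIdeal.mem_asIdeal.1 hfI),
      J.mul_mem_left _ _ (TwoSidedIdeal.mem_asIdeal.1 hgJ)⟩
  rw [h.eq_bot, TwoSidedIdeal.mem_bot] at hfg
  exact mul_ne_zero hfx hgx (by simpa using congr($hfg x))

theorem disjoint_idealOfSet {s t : Set X} (h : Disjoint s t) :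
    Disjoint (idealOfSet R s) (idealOfSet R t) := by
  rw [disjoint_iff, ← (ideal_gc X R).u_inf, h.eq_bot, bot_eq_empty, idealOfEmpty_eq_bot]

theorem cstarCCC_continuousMap_of_topCCC [T2Space R] [NoZeroDivisors R] (h : TopCCC X) :
    CStarCCC C(X, R) := fun _ _ hne horth =>
  h.countable_of_pairwiseDisjoint (U := fun I => setOfIdeal I.asIdeal)
    (horth.mono' fun _ _ hIJ => disjoint_setOfIdeal_asIdeal (disjoint_iff.2 hIJ))
    (fun _ _ => setOfIdeal_open _) fun I hI => setOfIdeal_asIdeal_nonempty (hne I hI)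

end IdealsOfContinuousFunctions

theorem TwoSidedIdeal.coe_orderIsoIdeal_symm {R : Type*} [CommRing R] (I : Ideal R) :
    (orderIsoIdeal.symm I : Set R) = I :=
  congrArg SetLike.coe (orderIsoIdeal.apply_symm_apply I)

section CompactHausdorff

variable {X 𝕜 : Type*} [TopologicalSpace X] [CompactSpace X] [T2Space X] [RCLike 𝕜]

open TwoSidedIdeal

theorem idealOfSet_ne_bot {s : Set X} (hs : IsOpen s) (hne : s.Nonempty) :
    idealOfSet 𝕜 s ≠ ⊥ := fun hbot => by
  have := setOfIdeal_ofSet_of_isOpen 𝕜 hs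
  rw [hbot, (ideal_gc X 𝕜).l_bot] at this
  exact hne.ne_empty this.symm

theorem topCCC_of_cstarCCC_continuousMap (h : CStarCCC C(X, 𝕜)) : TopCCC X :=
  fun _ ho hne hdisj =>
  h.countable_of_pairwiseDisjoint (I := fun U => orderIsoIdeal.symm (idealOfSet 𝕜 U))
    (hdisj.mono' fun _ _ hUV => (disjoint_idealOfSet hUV).map_orderIso _)
    (fun U _ => by rw [coe_orderIsoIdeal_symm]; exact idealOfSet_closed 𝕜 U)
    fun U hU => by
      rw [Ne, ← orderIsoIdeal.symm.map_bot, EmbeddingLike.apply_eq_iff_eq]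
      exact idealOfSet_ne_bot (ho U hU) (hne U hU)

theorem cstarCCC_continuousMap_iff_topCCC : CStarCCC C(X, 𝕜) ↔ TopCCC X :=
  ⟨topCCC_of_cstarCCC_continuousMap, cstarCCC_continuousMap_of_topCCC⟩

end CompactHausdorff

noncomputable abbrev conditionallyCompleteLinearOrderOfExistsIsLUBIsGLB (S : Type*) [LinearOrder S]
    [Nonempty S] (hsup : ∀ s : Set S, s.Nonempty → BddAbove s → ∃ a, IsLUB s a)
    (hinf : ∀ s : Set S, s.Nonempty → BddBelow s → ∃ a, IsGLB s a) :
    ConditionallyCompleteLinearOrder S :=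
  open scoped Classical in
  { ‹LinearOrder S›, LinearOrder.toLattice with
    sSup s := if h : s.Nonempty ∧ BddAbove s then (hsup s h.1 h.2).choose
      else Classical.arbitrary S
    sInf s := if h : s.Nonempty ∧ BddBelow s then (hinf s h.1 h.2).choose
      else Classical.arbitrary S
    isLUB_csSup s hn hb := by
      simp only [dif_pos (And.intro hn hb)]; exact (hsup s hn hb).choose_spec
    isGLB_csInf s hn hb := by
      simp only [dif_pos (And.intro hn hb)]; exact (hinf s hn hb).choose_spec
    csSup_of_not_bddAbove s hs := by simp [hs]
    csInf_of_not_bddBelow s hs := by simp [hs] }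

theorem disjoint_Ioo_prod_Ioo {S : Type*} [LinearOrder S] {a b c a' b' c' : S} (h : b' ∉ Ioo a c) :
    Disjoint (Ioo a b ×ˢ Ioo b c) (Ioo a' b' ×ˢ Ioo b' c') := by
  rw [disjoint_prod]
  rcases le_or_gt b' a with hb' | hb'
  · exact .inl <| disjoint_left.2 fun x hx hx' => (hx'.2.trans_le hb').not_gt hx.1
  · have hcb' : c ≤ b' := not_lt.1 fun h' => h ⟨hb', h'⟩
    exact .inr <| disjoint_left.2 fun y hy hy' => (hy.2.trans_le hcb').not_gt hy'.1

section OrderTopology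

variable {S : Type*} [LinearOrder S] [TopologicalSpace S] [OrderTopology S]

theorem compactIccSpace_of_exists_isLUB_isGLB [Nonempty S]
    (hsup : ∀ s : Set S, s.Nonempty → BddAbove s → ∃ a, IsLUB s a)
    (hinf : ∀ s : Set S, s.Nonempty → BddBelow s → ∃ a, IsGLB s a) : CompactIccSpace S :=
  letI := conditionallyCompleteLinearOrderOfExistsIsLUBIsGLB S hsup hinf
  ConditionallyCompleteLinearOrder.toCompactIccSpace S

theorem weaklyLocallyCompactSpace_of_compactIccSpace [CompactIccSpace S] [NoMinOrder S]
    [NoMaxOrder S] : WeaklyLocallyCompactSpace S where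
  exists_compact_mem_nhds x :=
    let ⟨a, ha⟩ := exists_lt x
    let ⟨b, hb⟩ := exists_gt x
    ⟨Icc a b, isCompact_Icc, Icc_mem_nhds ha hb⟩

theorem noncompactSpace_of_noMaxOrder [Nonempty S] [NoMaxOrder S] : NoncompactSpace S := by
  refine ⟨fun hcpt => ?_⟩
  obtain ⟨m, -, hm⟩ := hcpt.exists_isGreatest univ_nonempty
  obtain ⟨x, hx⟩ := exists_gt m
  exact (hm (mem_univ x)).not_gt hx

theorem exists_Ioo_disjoint_of_not_separableSpace [DenselyOrdered S]
    (hsep : ¬SeparableSpace S) {D : Set S} (hD : D.Countable) :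
    ∃ a b c, a < b ∧ b < c ∧ Disjoint (Ioo a c) D := by
  have hcl : closure D ≠ univ := fun hcl => hsep ⟨⟨D, hD, dense_iff_closure_eq.2 hcl⟩⟩
  have : Nontrivial S := by
    by_contra hS
    have := not_nontrivial_iff_subsingleton.1 hS
    exact hsep inferInstance
  obtain ⟨a, c, hac, hsub⟩ :=
    isClosed_closure.isOpen_compl.exists_Ioo_subset (nonempty_compl.2 hcl)
  obtain ⟨b, hab, hbc⟩ := exists_between hac
  exact ⟨a, b, c, hab, hbc, (disjoint_compl_left.mono_right subset_closure).mono_left hsub⟩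

theorem not_topCCC_prod_of_not_separableSpace [DenselyOrdered S] (hsep : ¬SeparableSpace S) :
    ¬TopCCC (S × S) := by
  intro hccc
  let box : S × S × S → Set (S × S) := fun t => Ioo t.1 t.2.1 ×ˢ Ioo t.2.1 t.2.2
  obtain ⟨P, hP⟩ :=
    exists_maximal_pairwiseDisjoint {t : S × S × S | t.1 < t.2.1 ∧ t.2.1 < t.2.2} box
  have hPc : P.Countable := hccc.countable_of_pairwiseDisjoint hP.prop.2
    (fun _ _ => isOpen_Ioo.prod isOpen_Ioo) fun _ ht =>
      (nonempty_Ioo.2 (hP.prop.1 ht).1).prod (nonempty_Ioo.2 (hP.prop.1 ht).2)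
  obtain ⟨a, b, c, hab, hbc, hD⟩ :=
    exists_Ioo_disjoint_of_not_separableSpace hsep (hPc.image fun t => t.2.1)
  have hfresh : ∀ t ∈ P, t.2.1 ∉ Ioo a c := fun t ht hmem =>
    disjoint_left.1 hD hmem (mem_image_of_mem _ ht)
  have hnew : (a, b, c) ∈ P := hP.mem_of_prop_insert
    ⟨insert_subset ⟨hab, hbc⟩ hP.prop.1,
      hP.prop.2.insert fun t ht _ => disjoint_Ioo_prod_Ioo (hfresh t ht)⟩
  exact hfresh _ hnew ⟨hab, hbc⟩

end OrderTopology

open OnePoint in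
/-- If `S` is a Suslin line and `X` its one-point compactification, then `X` is a compact
Hausdorff space with the countable chain condition while `X × X` does not have the
countable chain condition; consequently `C(X, ℂ)` is a (unital commutative) C*-algebra
with the countable chain condition while `C(X × X, ℂ)` does not have the countable chain
condition. -/
theorem stmt_12 (S : Type*) [LinearOrder S] [TopologicalSpace S] [OrderTopology S]
    (h : IsSuslinLine S) :
    CompactSpace (OnePoint S) ∧ T2Space (OnePoint S) ∧ TopCCC (OnePoint S) ∧
      ¬TopCCC (OnePoint S × OnePoint S) ∧
      CStarCCC C(OnePoint S, ℂ) ∧ ¬CStarCCC C(OnePoint S × OnePoint S, ℂ) := by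
  obtain ⟨_, _, _, hsup, hinf, hccc, hsep⟩ := h
  have : Nonempty S := not_isEmpty_iff.1 fun _ => hsep inferInstance
  have := compactIccSpace_of_exists_isLUB_isGLB hsup hinf
  have := weaklyLocallyCompactSpace_of_compactIccSpace (S := S)
  have := noncompactSpace_of_noMaxOrder (S := S)
  have hX : TopCCC (OnePoint S) := hccc.of_denseRange continuous_coe denseRange_coe
  have hXX : ¬TopCCC (OnePoint S × OnePoint S) := fun h =>
    not_topCCC_prod_of_not_separableSpace hsep
      (h.of_isOpenEmbedding ((isOpenEmbedding_coe (X := S)).prodMap isOpenEmbedding_coe))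
  exact ⟨inferInstance, inferInstance, hX, hXX, cstarCCC_continuousMap_iff_topCCC.2 hX,
    mt cstarCCC_continuousMap_iff_topCCC.1 hXX⟩
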